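/- Let η ∈ Ξ. For any ε > 0 there exists r > 0 such that for all continuous ℤⁿ-periodic functions F on ℝⁿ, ‖χ_r · η · F‖_{L²(ℝⁿ)} ≤ ε · ‖F‖_{L²([0,1]ⁿ)}, where χ_r is the indicator of the complement of the ball of radius r centered at 0. -/

import Mathlib

open MeasureTheory Filter ComplexConjugate

noncomputable section

/-- The embedding of the integer lattice `ℤⁿ` into `ℝⁿ`. -/
def latt {n : ℕ} (p : Fin n → ℤ) : Fin n → ℝ := fun i => (p i : ℝ)

/-- The periodization of the square modulus of `ξ`. -/
def perSum {n : ℕ} (ξ : (Fin n → ℝ) → ℂ) (x : Fin n → ℝ) : ℝ :=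
  ∑' p : Fin n → ℤ, ‖ξ (x - latt p)‖ ^ 2

/-- Membership in the module `Ξ`: bounded continuous functions whose
periodization of the square modulus is (summable,) uniformly bounded and continuous. -/
def InXi {n : ℕ} (ξ : (Fin n → ℝ) → ℂ) : Prop :=
  Continuous ξ ∧ (∃ M, ∀ x, ‖ξ x‖ ≤ M) ∧
  (∀ x, Summable fun p : Fin n → ℤ => ‖ξ (x - latt p)‖ ^ 2) ∧
  (∃ K, ∀ x, perSum ξ x ≤ K) ∧ Continuous (perSum ξ)

/-- The norm `‖ξ‖_A = sup_x (∑_{p∈ℤⁿ} |ξ(x-p)|²)^{1/2}`. -/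
def normA {n : ℕ} (ξ : (Fin n → ℝ) → ℂ) : ℝ := Real.sqrt (⨆ x, perSum ξ x)

/-- The `C(𝕋ⁿ)`-valued inner product `⟨ξ,η⟩_A(x) = ∑_{p∈ℤⁿ} conj(ξ(x-p)) η(x-p)`. -/
def innerA {n : ℕ} (ξ η : (Fin n → ℝ) → ℂ) (x : Fin n → ℝ) : ℂ :=
  ∑' p : Fin n → ℤ, conj (ξ (x - latt p)) * η (x - latt p)

/-! The partial sums `∑_{p ∈ S} |η(x - p)|²` increase to the continuous function `perSum η`, so
by Dini's theorem there is a finite `S ⊆ ℤⁿ` with `∑_{p ∉ S} |η(x - p)|² ≤ ε²` uniformly on the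
unit cube. Unfolding the integral over `ℝⁿ` along the fundamental domain `[0,1)ⁿ` of `ℤⁿ` and
using the periodicity of `F`,
`∫_{|x| ≥ r} |η F|² = ∫_{[0,1)ⁿ} |F(x)|² ∑_{p : |x - p| ≥ r} |η(x - p)|²`,
and once `r` exceeds `1 + max_{p ∈ S} |p|` only `p ∉ S` contribute to the inner sum. -/

open scoped ENNReal

lemma coe_basisFun_restrictScalars_equivFun_symm {n : ℕ} (p : Fin n → ℤ) :
    (((Pi.basisFun ℝ (Fin n)).restrictScalars ℤ).equivFun.symm p : Fin n → ℝ) = latt p := by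
  ext i
  simp [Module.Basis.equivFun_symm_apply, latt, Finset.sum_apply, Pi.single_apply]

lemma lintegral_eq_tsum_setLIntegral_sub_latt {n : ℕ} (f : (Fin n → ℝ) → ℝ≥0∞) :
    ∫⁻ x, f x = ∑' p : Fin n → ℤ,
      ∫⁻ x in Set.univ.pi (fun _ => Set.Ico (0 : ℝ) 1), f (x - latt p) := by
  let e : (Fin n → ℤ) ≃ (Submodule.span ℤ (Set.range (Pi.basisFun ℝ (Fin n)))).toAddSubgroup :=
    ((Pi.basisFun ℝ (Fin n)).restrictScalars ℤ).equivFun.symm.toEquiv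
  have : Countable (Submodule.span ℤ (Set.range (Pi.basisFun ℝ (Fin n)))).toAddSubgroup :=
    e.symm.injective.countable
  have h := (ZSpan.isAddFundamentalDomain' (Pi.basisFun ℝ (Fin n)) volume).lintegral_eq_tsum' f
  rw [ZSpan.fundamentalDomain_pi_basisFun] at h
  rw [h, ← e.tsum_eq]
  refine tsum_congr fun p =>
    setLIntegral_congr_fun (.univ_pi fun _ => measurableSet_Ico) fun x _ => ?_
  rw [AddSubgroup.vadd_def, vadd_eq_add, AddSubgroup.coe_neg, neg_add_eq_sub]
  exact congrArg (fun v => f (x - v)) (coe_basisFun_restrictScalars_equivFun_symm p)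

section Tail

variable {n : ℕ} {η : (Fin n → ℝ) → ℂ}

lemma InXi.tendstoUniformlyOn_sum_norm_sq (hη : InXi η) {K : Set (Fin n → ℝ)}
    (hK : IsCompact K) :
    TendstoUniformlyOn (fun (S : Finset (Fin n → ℤ)) x => ∑ p ∈ S, ‖η (x - latt p)‖ ^ 2)
      (perSum η) atTop K := by
  obtain ⟨hη, -, hsum, -, hper⟩ := hη
  exact Monotone.tendstoUniformlyOn_of_forall_tendsto hK (fun S => by fun_prop)
    (fun _ _ _ _ hST => Finset.sum_le_sum_of_subset_of_nonneg hST fun _ _ _ => by positivity)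
    hper.continuousOn fun x _ => (hsum x).hasSum

lemma InXi.exists_finset_tsum_compl_le (hη : InXi η) {K : Set (Fin n → ℝ)} (hK : IsCompact K)
    {δ : ℝ} (hδ : 0 < δ) :
    ∃ S : Finset (Fin n → ℤ), ∀ x ∈ K,
      ∑' p, (↑S : Set (Fin n → ℤ))ᶜ.indicator (fun p => ‖η (x - latt p)‖ₑ ^ 2) p ≤
        ENNReal.ofReal δ := by
  obtain ⟨S, hS⟩ :=
    (Metric.tendstoUniformlyOn_iff.1 (hη.tendstoUniformlyOn_sum_norm_sq hK) δ hδ).exists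
  refine ⟨S, fun x hx => ?_⟩
  have hsum := hη.2.2.1 x
  have htail : ∑' p, (↑S : Set (Fin n → ℤ))ᶜ.indicator (fun p => ‖η (x - latt p)‖ ^ 2) p =
      perSum η x - ∑ p ∈ S, ‖η (x - latt p)‖ ^ 2 := by
    rw [perSum, ← hsum.sum_add_tsum_compl (s := S), add_sub_cancel_left]
    exact (tsum_subtype _ _).symm
  calc ∑' p, (↑S : Set (Fin n → ℤ))ᶜ.indicator (fun p => ‖η (x - latt p)‖ₑ ^ 2) p
      = ENNReal.ofReal (∑' p, (↑S : Set (Fin n → ℤ))ᶜ.indicator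
          (fun p => ‖η (x - latt p)‖ ^ 2) p) := by
        rw [ENNReal.ofReal_tsum_of_nonneg
          (fun p => Set.indicator_nonneg (fun _ _ => by positivity) p) (hsum.indicator _)]
        refine tsum_congr fun p => ?_
        by_cases hp : p ∈ (↑S : Set (Fin n → ℤ))ᶜ <;> simp [hp, ENNReal.ofReal_pow]
    _ ≤ ENNReal.ofReal δ := by
        rw [htail]
        exact ENNReal.ofReal_le_ofReal ((le_abs_self _).trans (Real.dist_eq _ _ ▸ hS x hx).le)

end Tail

lemma sqrt_integral_norm_sq_le {α E F : Type*} [MeasurableSpace α] [NormedAddCommGroup E]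
    [NormedAddCommGroup F] {μ ν : Measure α} {f : α → E} {g : α → F} {c : ℝ} (hc : 0 ≤ c)
    (hg : Integrable (fun x => ‖g x‖ ^ 2) ν)
    (h : ∫⁻ x, ‖f x‖ₑ ^ 2 ∂μ ≤ ENNReal.ofReal (c ^ 2) * ∫⁻ x, ‖g x‖ₑ ^ 2 ∂ν) :
    Real.sqrt (∫ x, ‖f x‖ ^ 2 ∂μ) ≤ c * Real.sqrt (∫ x, ‖g x‖ ^ 2 ∂ν) := by
  have hf : ENNReal.ofReal (∫ x, ‖f x‖ ^ 2 ∂μ) ≤ ∫⁻ x, ‖f x‖ₑ ^ 2 ∂μ := by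
    by_cases hfi : AEStronglyMeasurable (fun x => ‖f x‖ ^ 2) μ
    · rw [integral_eq_lintegral_of_nonneg_ae (ae_of_all _ fun x => by positivity) hfi]
      simpa [ENNReal.ofReal_pow] using ENNReal.ofReal_toReal_le
    · simp [integral_non_aestronglyMeasurable hfi]
  have hg' : ∫⁻ x, ‖g x‖ₑ ^ 2 ∂ν = ENNReal.ofReal (∫ x, ‖g x‖ ^ 2 ∂ν) := by
    rw [ofReal_integral_eq_lintegral_ofReal hg (ae_of_all _ fun x => by positivity)]
    simp [ENNReal.ofReal_pow]
  have hle : ∫ x, ‖f x‖ ^ 2 ∂μ ≤ c ^ 2 * ∫ x, ‖g x‖ ^ 2 ∂ν := by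
    rw [← ENNReal.ofReal_le_ofReal_iff (by positivity), ENNReal.ofReal_mul (by positivity), ← hg']
    exact hf.trans h
  calc Real.sqrt (∫ x, ‖f x‖ ^ 2 ∂μ) ≤ Real.sqrt (c ^ 2 * ∫ x, ‖g x‖ ^ 2 ∂ν) :=
        Real.sqrt_le_sqrt hle
    _ = c * Real.sqrt (∫ x, ‖g x‖ ^ 2 ∂ν) := by rw [Real.sqrt_mul (by positivity), Real.sqrt_sq hc]

lemma notMem_of_le_norm_sub_latt {n : ℕ} {S : Finset (Fin n → ℤ)} {x : Fin n → ℝ}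
    (hx : x ∈ Set.Icc 0 1) {p : Fin n → ℤ} (h : 2 + ∑ q ∈ S, ‖latt q‖ ≤ ‖x - latt p‖) :
    p ∉ S := by
  intro hp
  have hx1 : ‖x‖ ≤ 1 := (pi_norm_le_iff_of_nonneg zero_le_one).2 fun i => by
    rw [Real.norm_eq_abs, abs_le]
    exact ⟨by linarith [show (0 : ℝ) ≤ x i from hx.1 i], hx.2 i⟩
  have hp1 : ‖latt p‖ ≤ ∑ q ∈ S, ‖latt q‖ := Finset.single_le_sum (fun q _ => norm_nonneg _) hp
  linarith [norm_sub_le x (latt p)]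

lemma tsum_indicator_enorm_mul_sq_le {n : ℕ} {η F : (Fin n → ℝ) → ℂ} {A : Set (Fin n → ℝ)}
    {S : Finset (Fin n → ℤ)} {x : Fin n → ℝ} {c : ℝ≥0∞}
    (hF : ∀ p, F (x - latt p) = F x) (hA : ∀ p, x - latt p ∈ A → p ∉ S)
    (hS : ∑' p, (↑S : Set (Fin n → ℤ))ᶜ.indicator (fun p => ‖η (x - latt p)‖ₑ ^ 2) p ≤ c) :
    ∑' p, A.indicator (fun y => ‖η y * F y‖ₑ ^ 2) (x - latt p) ≤ c * ‖F x‖ₑ ^ 2 :=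
  calc ∑' p, A.indicator (fun y => ‖η y * F y‖ₑ ^ 2) (x - latt p)
      ≤ ∑' p, (↑S : Set (Fin n → ℤ))ᶜ.indicator (fun p => ‖η (x - latt p)‖ₑ ^ 2) p *
          ‖F x‖ₑ ^ 2 := ENNReal.tsum_le_tsum fun p => by
        by_cases hp : x - latt p ∈ A
        · simp [Set.indicator_of_mem hp, hA p hp, hF p, enorm_mul, mul_pow]
        · simp [Set.indicator_of_notMem hp]
    _ = (∑' p, (↑S : Set (Fin n → ℤ))ᶜ.indicator (fun p => ‖η (x - latt p)‖ₑ ^ 2) p) *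
          ‖F x‖ₑ ^ 2 := ENNReal.tsum_mul_right
    _ ≤ c * ‖F x‖ₑ ^ 2 := mul_le_mul_left hS _

theorem stmt16 {n : ℕ} (η : (Fin n → ℝ) → ℂ) (hη : InXi η) :
    ∀ ε > 0, ∃ r > 0, ∀ F : (Fin n → ℝ) → ℂ,
      Continuous F → (∀ x (p : Fin n → ℤ), F (x + latt p) = F x) →
      Real.sqrt (∫ x in {x : Fin n → ℝ | r ≤ ‖x‖}, ‖η x * F x‖ ^ 2) ≤
        ε * Real.sqrt (∫ x in Set.Icc (0 : Fin n → ℝ) 1, ‖F x‖ ^ 2) := by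
  intro ε hε
  obtain ⟨S, hS⟩ := hη.exists_finset_tsum_compl_le isCompact_Icc (pow_pos hε 2)
  refine ⟨2 + ∑ q ∈ S, ‖latt q‖, by positivity, fun F hF hper => ?_⟩
  set A := {x : Fin n → ℝ | 2 + ∑ q ∈ S, ‖latt q‖ ≤ ‖x‖}
  have hA : MeasurableSet A := (isClosed_le continuous_const continuous_norm).measurableSet
  set box : Set (Fin n → ℝ) := Set.univ.pi fun _ => Set.Ico 0 1
  have hbox : box ⊆ Set.Icc 0 1 := fun x hx =>
    ⟨fun i => (hx i trivial).1, fun i => (hx i trivial).2.le⟩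
  refine sqrt_integral_norm_sq_le hε.le (hF.norm.pow 2).integrableOn_Icc ?_
  calc ∫⁻ x in A, ‖η x * F x‖ₑ ^ 2
      = ∫⁻ x in box, ∑' p, A.indicator (fun y => ‖η y * F y‖ₑ ^ 2) (x - latt p) := by
        rw [← lintegral_indicator hA, lintegral_eq_tsum_setLIntegral_sub_latt, lintegral_tsum]
        exact fun p => ((((hη.1.mul hF).measurable.enorm.pow_const 2).indicator hA).comp
          (measurable_id.sub_const _)).aemeasurable
    _ ≤ ∫⁻ x in box, ENNReal.ofReal (ε ^ 2) * ‖F x‖ₑ ^ 2 :=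
        setLIntegral_mono (by fun_prop) fun x hx =>
          tsum_indicator_enorm_mul_sq_le (fun p => by simpa using (hper (x - latt p) p).symm)
            (fun p hp => notMem_of_le_norm_sub_latt (hbox hx) hp) (hS x (hbox hx))
    _ = ENNReal.ofReal (ε ^ 2) * ∫⁻ x in box, ‖F x‖ₑ ^ 2 :=
        lintegral_const_mul' _ _ ENNReal.ofReal_ne_top
    _ ≤ ENNReal.ofReal (ε ^ 2) * ∫⁻ x in Set.Icc 0 1, ‖F x‖ₑ ^ 2 :=
        mul_le_mul_right (lintegral_mono_set hbox) _
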